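/- If u* and l* satisfy l* ≤ a↓_k ≤ u*, ∑_{i=1}^k max{u* − a↓_i, 0} = ∑_{j=k+1}^n max{a↓_j − l*, 0}, and ∑_{i=1}^n max{a_i − u*, 0} + k·l* = min{T_k(a), r}, then the vector x* defined by x*_i = a_i − (u* − l*) if a_i > u*, x*_i = l* if l* ≤ a_i ≤ u*, and x*_i = a_i if a_i < l*, is the Euclidean projection of a onto {x : T_k(x) ≤ r}. -/

import Mathlib

/-!
Write `x = a - d`. The decrement `d i` is `a i - l` clamped to `[0, u - l]`, and the balance
condition makes `∑ d = k (u - l)`. Any weights in `[0, λ]` summing to `kλ` satisfy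
`⟨d, y⟩ ≤ λ T_k(y)` (compare with the `k`-th largest entry of `y`), while the last condition
gives `⟨d, x⟩ = λ min (T_k(a), r)` and `T_k(x) ≤ min (T_k(a), r)`. So `x` is feasible, and
`⟨a - x, y - x⟩ ≤ 0` for every feasible `y` when `T_k(a) > r`, which is the variational
characterisation of the projection; when `T_k(a) ≤ r` the same identities force `x = a`.
-/

open Finset

/-- The entries of `a` rearranged in nonincreasing order. -/
noncomputable def sortDesc (n : ℕ) (a : Fin n → ℝ) : Fin n → ℝ :=
  fun i => a (Tuple.sort a i.rev)

/-- The sum of the `k` largest entries of `a`. -/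
noncomputable def topKSum (n k : ℕ) (a : Fin n → ℝ) : ℝ :=
  ∑ i : Fin n, if (i : ℕ) < k then sortDesc n a i else 0

lemma sum_ite_val_lt_const {n k : ℕ} (hk : k ≤ n) (c : ℝ) :
    ∑ i : Fin n, (if (i : ℕ) < k then c else 0) = k * c := by
  rw [← Finset.sum_filter, Finset.sum_const, Fin.card_filter_val_lt, min_eq_right hk,
    nsmul_eq_mul]

section SortDesc

variable {n : ℕ}

noncomputable def sortDescPerm (n : ℕ) (y : Fin n → ℝ) : Equiv.Perm (Fin n) :=
  Fin.revPerm.trans (Tuple.sort y)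

lemma sortDesc_antitone (y : Fin n → ℝ) : Antitone (sortDesc n y) :=
  fun _ _ hij => Tuple.monotone_sort y (Fin.rev_le_rev.2 hij)

lemma sum_comp_sortDesc (f : ℝ → ℝ) (y : Fin n → ℝ) :
    ∑ i, f (sortDesc n y i) = ∑ i, f (y i) :=
  Equiv.sum_comp (sortDescPerm n y) (f ∘ y)

end SortDesc

section TopKSum

variable {n k : ℕ}

lemma topKSum_le_sum_add {x p : Fin n → ℝ} {c : ℝ} (hk : k ≤ n) (hp : ∀ j, 0 ≤ p j)
    (hx : ∀ j, x j ≤ p j + c) : topKSum n k x ≤ ∑ j, p j + k * c := by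
  set σ := sortDescPerm n x
  calc topKSum n k x
      ≤ ∑ i : Fin n, ((if (i : ℕ) < k then p (σ i) else 0) + if (i : ℕ) < k then c else 0) := by
        refine Finset.sum_le_sum fun i _ => ?_
        split_ifs
        · exact hx (σ i)
        · simp
    _ ≤ ∑ i, p (σ i) + k * c := by
        rw [Finset.sum_add_distrib, sum_ite_val_lt_const hk]
        gcongr with i
        split_ifs
        exacts [le_rfl, hp (σ i)]
    _ = ∑ j, p j + k * c := by rw [Equiv.sum_comp σ p]

lemma sum_mul_le_mul_topKSum (hk : k < n) {lam : ℝ} {d : Fin n → ℝ} (hd0 : ∀ i, 0 ≤ d i)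
    (hd1 : ∀ i, d i ≤ lam) (hsum : ∑ i, d i = k * lam) (y : Fin n → ℝ) :
    ∑ i, d i * y i ≤ lam * topKSum n k y := by
  set σ := sortDescPerm n y
  set c := sortDesc n y ⟨k, hk⟩
  have hzero : ∑ i : Fin n, (d (σ i) - if (i : ℕ) < k then lam else 0) * c = 0 := by
    rw [← Finset.sum_mul, Finset.sum_sub_distrib, Equiv.sum_comp σ d, hsum,
      sum_ite_val_lt_const hk.le, sub_self, zero_mul]
  -- the threshold `c` lies below the top `k` sorted entries and above the others
  have hterm : ∀ i : Fin n, d (σ i) * y (σ i) - lam * (if (i : ℕ) < k then y (σ i) else 0)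
      ≤ (d (σ i) - if (i : ℕ) < k then lam else 0) * c := by
    intro i
    split_ifs with hik
    · have hc : c ≤ y (σ i) := sortDesc_antitone y (Fin.le_def.2 hik.le)
      nlinarith [hd1 (σ i)]
    · have hc : y (σ i) ≤ c := sortDesc_antitone y (Fin.le_def.2 (not_lt.1 hik))
      nlinarith [hd0 (σ i)]
  have hsplit : ∑ i, d i * y i - lam * topKSum n k y
      = ∑ i : Fin n, (d (σ i) * y (σ i) - lam * if (i : ℕ) < k then y (σ i) else 0) := by
    rw [← Equiv.sum_comp σ fun i => d i * y i, topKSum, Finset.mul_sum, ← Finset.sum_sub_distrib]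
    rfl
  linarith [Finset.sum_le_sum fun i (_ : i ∈ Finset.univ) => hterm i]

end TopKSum

lemma sum_sq_sub_le_of_sum_mul_nonpos {ι : Type*} [Fintype ι] {a x y : ι → ℝ}
    (h : ∑ i, (a i - x i) * (y i - x i) ≤ 0) :
    ∑ i, (x i - a i) ^ 2 ≤ ∑ i, (y i - a i) ^ 2 := by
  have hexpand : ∑ i, (y i - a i) ^ 2
      = ∑ i, (x i - a i) ^ 2 + ∑ i, (y i - x i) ^ 2 - 2 * ∑ i, (a i - x i) * (y i - x i) := by
    rw [Finset.mul_sum, ← Finset.sum_add_distrib, ← Finset.sum_sub_distrib]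
    exact Finset.sum_congr rfl fun i _ => by ring
  have hnonneg : 0 ≤ ∑ i, (y i - x i) ^ 2 := Finset.sum_nonneg fun i _ => sq_nonneg _
  linarith

noncomputable def shrinkEntry (l u t : ℝ) : ℝ :=
  if u < t then t - (u - l) else if l ≤ t then l else t

section ShrinkEntry

variable {l u : ℝ} (t : ℝ)

lemma sub_shrinkEntry_nonneg (hlu : l ≤ u) : 0 ≤ t - shrinkEntry l u t := by
  unfold shrinkEntry; split_ifs <;> linarith

lemma sub_shrinkEntry_le (hlu : l ≤ u) : t - shrinkEntry l u t ≤ u - l := by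
  unfold shrinkEntry; split_ifs <;> linarith

lemma shrinkEntry_le : shrinkEntry l u t ≤ max (t - u) 0 + l := by
  unfold shrinkEntry; split_ifs <;> simp only [max_def] <;> split_ifs <;> linarith

lemma sub_shrinkEntry_mul (hlu : l ≤ u) :
    (t - shrinkEntry l u t) * shrinkEntry l u t
      = (u - l) * max (t - u) 0 + l * (t - shrinkEntry l u t) := by
  unfold shrinkEntry; split_ifs <;> simp only [max_def] <;> split_ifs <;> first | ring1 | linarith

lemma sub_shrinkEntry_of_le (ht : l ≤ t) :
    t - shrinkEntry l u t = (u - l) - max (u - t) 0 := by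
  unfold shrinkEntry; split_ifs <;> simp only [max_def] <;> split_ifs <;> first | ring1 | linarith

lemma sub_shrinkEntry_of_ge (ht : t ≤ u) : t - shrinkEntry l u t = max (t - l) 0 := by
  unfold shrinkEntry; split_ifs <;> simp only [max_def] <;> split_ifs <;> first | ring1 | linarith

end ShrinkEntry

lemma sum_sub_shrinkEntry {n k : ℕ} (hk : k < n) {a : Fin n → ℝ} {l u : ℝ}
    (hl : l ≤ sortDesc n a ⟨k - 1, by omega⟩) (hu : sortDesc n a ⟨k - 1, by omega⟩ ≤ u)
    (harea : (∑ i : Fin n, if (i : ℕ) < k then max (u - sortDesc n a i) 0 else 0)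
        = ∑ j : Fin n, if k ≤ (j : ℕ) then max (sortDesc n a j - l) 0 else 0) :
    ∑ i, (a i - shrinkEntry l u (a i)) = k * (u - l) := by
  have hpos : ∀ i : Fin n, sortDesc n a i - shrinkEntry l u (sortDesc n a i)
      = (if (i : ℕ) < k then u - l else 0)
        - (if (i : ℕ) < k then max (u - sortDesc n a i) 0 else 0)
        + (if k ≤ (i : ℕ) then max (sortDesc n a i - l) 0 else 0) := by
    intro i
    have hanti := sortDesc_antitone a (a := i) (b := ⟨k - 1, by omega⟩)
    have hanti' := sortDesc_antitone a (a := ⟨k - 1, by omega⟩) (b := i)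
    simp only [Fin.le_def] at hanti hanti'
    split_ifs with h₁ h₂ h₂
    · omega
    · rw [sub_shrinkEntry_of_le _ (hl.trans (hanti (by omega)))]; ring
    · rw [sub_shrinkEntry_of_ge _ ((hanti' (by omega)).trans hu)]; ring
    · omega
  rw [← sum_comp_sortDesc (fun t => t - shrinkEntry l u t), Finset.sum_congr rfl fun i _ => hpos i,
    Finset.sum_add_distrib, Finset.sum_sub_distrib, harea, sum_ite_val_lt_const hk.le]
  ring

/-- If `(u*, l*)` satisfies the KKT system, then the vector built from `(u*, l*)`
is the Euclidean projection of `a` onto the top-`k`-sum constraint set. -/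
theorem stmt16 (n k : ℕ) (hk1 : 1 ≤ k) (hk : k < n) (r : ℝ)
    (a : Fin n → ℝ) (ustar lstar : ℝ)
    (hl : lstar ≤ sortDesc n a ⟨k - 1, by omega⟩)
    (hu : sortDesc n a ⟨k - 1, by omega⟩ ≤ ustar)
    (harea : (∑ i : Fin n, if (i : ℕ) < k then max (ustar - sortDesc n a i) 0 else 0)
        = ∑ j : Fin n, if k ≤ (j : ℕ) then max (sortDesc n a j - lstar) 0 else 0)
    (hsum : (∑ i : Fin n, max (a i - ustar) 0) + (k : ℝ) * lstar
        = min (topKSum n k a) r) :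
    topKSum n k (fun i =>
        if ustar < a i then a i - (ustar - lstar)
        else if lstar ≤ a i then lstar else a i) ≤ r ∧
    ∀ y : Fin n → ℝ, topKSum n k y ≤ r →
      ∑ i : Fin n, ((if ustar < a i then a i - (ustar - lstar)
          else if lstar ≤ a i then lstar else a i) - a i) ^ 2
        ≤ ∑ i : Fin n, (y i - a i) ^ 2 := by
  change topKSum n k (fun i => shrinkEntry lstar ustar (a i)) ≤ r ∧ ∀ y : Fin n → ℝ,
    topKSum n k y ≤ r → ∑ i, (shrinkEntry lstar ustar (a i) - a i) ^ 2 ≤ ∑ i, (y i - a i) ^ 2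
  set x := fun i => shrinkEntry lstar ustar (a i)
  have hlu : lstar ≤ ustar := hl.trans hu
  have hdsum := sum_sub_shrinkEntry hk hl hu harea
  have hdual := sum_mul_le_mul_topKSum hk (fun i => sub_shrinkEntry_nonneg (a i) hlu)
    (fun i => sub_shrinkEntry_le (a i) hlu) hdsum
  have hdx : ∑ i, (a i - x i) * x i = (ustar - lstar) * min (topKSum n k a) r := by
    simp only [x, sub_shrinkEntry_mul _ hlu, Finset.sum_add_distrib, ← Finset.mul_sum, hdsum,
      ← hsum]
    ring
  refine ⟨(topKSum_le_sum_add hk.le (fun _ => le_max_right _ _) (shrinkEntry_le <| a ·)).trans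
    (hsum.trans_le (min_le_right _ _)), fun y hy => ?_⟩
  rcases le_total (topKSum n k a) r with hra | hra
  · have hdist : ∑ i, (x i - a i) ^ 2 = ∑ i, (a i - x i) * a i - ∑ i, (a i - x i) * x i := by
      rw [← Finset.sum_sub_distrib]
      exact Finset.sum_congr rfl fun i _ => by ring
    have h0 : 0 ≤ ∑ i, (y i - a i) ^ 2 := Finset.sum_nonneg fun i _ => sq_nonneg _
    rw [min_eq_left hra] at hdx
    linarith [hdual a]
  · refine sum_sq_sub_le_of_sum_mul_nonpos (x := x) ?_
    simp only [mul_sub, Finset.sum_sub_distrib, hdx, min_eq_right hra, sub_nonpos]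
    exact (hdual y).trans (mul_le_mul_of_nonneg_left hy (sub_nonneg.2 hlu))
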